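/- Let R¹, R² : ℝ³ → ℝ be smooth functions of (x, y, t) satisfying Rⁱ_y = μⁱ Rⁱ_x and Rⁱ_t = λⁱ Rⁱ_x for i = 1, 2, where μ¹ = R² + 3R¹, μ² = R¹ + 3R², λ¹ = 2(R¹ + R²)² + 8(R¹)², λ² = 2(R¹ + R²)² + 8(R²)². Then u := (R¹ − R²)² and w := 2(R¹ − R²)²(R¹ + R²) satisfy the dKP system u_t − u u_x = w_y and u_y = w_x. -/

import Mathlib

noncomputable def pd {n : ℕ} (i : Fin n) (f : (Fin n → ℝ) → ℝ) (p : Fin n → ℝ) : ℝ :=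
  fderiv ℝ f p (Pi.single i 1)

lemma pd_mul {n : ℕ} (i : Fin n) {f g : (Fin n → ℝ) → ℝ} {p : Fin n → ℝ}
    (hf : DifferentiableAt ℝ f p) (hg : DifferentiableAt ℝ g p) :
    pd i (fun s => f s * g s) p = pd i f p * g p + f p * pd i g p := by
  simp only [pd, fderiv_fun_mul hf hg, ContinuousLinearMap.add_apply,
    ContinuousLinearMap.smul_apply, smul_eq_mul]
  ring

lemma pd_sub {n : ℕ} (i : Fin n) {f g : (Fin n → ℝ) → ℝ} {p : Fin n → ℝ}
    (hf : DifferentiableAt ℝ f p) (hg : DifferentiableAt ℝ g p) :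
    pd i (fun s => f s - g s) p = pd i f p - pd i g p := by
  simp only [pd, fderiv_fun_sub hf hg, ContinuousLinearMap.sub_apply]

lemma pd_add {n : ℕ} (i : Fin n) {f g : (Fin n → ℝ) → ℝ} {p : Fin n → ℝ}
    (hf : DifferentiableAt ℝ f p) (hg : DifferentiableAt ℝ g p) :
    pd i (fun s => f s + g s) p = pd i f p + pd i g p := by
  simp only [pd, fderiv_fun_add hf hg, ContinuousLinearMap.add_apply]

lemma pd_const_mul {n : ℕ} (i : Fin n) {f : (Fin n → ℝ) → ℝ} {p : Fin n → ℝ}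
    (hf : DifferentiableAt ℝ f p) (c : ℝ) :
    pd i (fun s => c * f s) p = c * pd i f p := by
  simp only [pd, fderiv_const_mul hf c, ContinuousLinearMap.smul_apply, smul_eq_mul]

/-- The shallow-water two-phase reduction produces solutions of the dKP system. -/
theorem shallow_water_two_phase_dKP
    (R1 R2 : (Fin 3 → ℝ) → ℝ) (hR1 : ContDiff ℝ (⊤ : ℕ∞) R1) (hR2 : ContDiff ℝ (⊤ : ℕ∞) R2)
    (h1y : ∀ r : Fin 3 → ℝ, pd 1 R1 r = (R2 r + 3 * R1 r) * pd 0 R1 r)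
    (h2y : ∀ r : Fin 3 → ℝ, pd 1 R2 r = (R1 r + 3 * R2 r) * pd 0 R2 r)
    (h1t : ∀ r : Fin 3 → ℝ,
      pd 2 R1 r = (2 * (R1 r + R2 r) ^ 2 + 8 * (R1 r) ^ 2) * pd 0 R1 r)
    (h2t : ∀ r : Fin 3 → ℝ,
      pd 2 R2 r = (2 * (R1 r + R2 r) ^ 2 + 8 * (R2 r) ^ 2) * pd 0 R2 r) :
    (∀ r : Fin 3 → ℝ,
      pd 2 (fun s => (R1 s - R2 s) ^ 2) r
        - (R1 r - R2 r) ^ 2 * pd 0 (fun s => (R1 s - R2 s) ^ 2) r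
        = pd 1 (fun s => 2 * (R1 s - R2 s) ^ 2 * (R1 s + R2 s)) r) ∧
    (∀ r : Fin 3 → ℝ,
      pd 1 (fun s => (R1 s - R2 s) ^ 2) r
        = pd 0 (fun s => 2 * (R1 s - R2 s) ^ 2 * (R1 s + R2 s)) r) := by
  have d1 : ∀ p, DifferentiableAt ℝ R1 p := fun p => (hR1.differentiable (by simp)) p
  have d2 : ∀ p, DifferentiableAt ℝ R2 p := fun p => (hR2.differentiable (by simp)) p
  have dD : ∀ p, DifferentiableAt ℝ (fun s => R1 s - R2 s) p :=
    fun p => (d1 p).sub (d2 p)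
  have dS : ∀ p, DifferentiableAt ℝ (fun s => R1 s + R2 s) p :=
    fun p => (d1 p).add (d2 p)
  have dU : ∀ p, DifferentiableAt ℝ (fun s => (R1 s - R2 s) ^ 2) p := by
    intro p
    have : (fun s => (R1 s - R2 s) ^ 2) = fun s => (R1 s - R2 s) * (R1 s - R2 s) := by
      funext s; ring
    rw [this]; exact (dD p).mul (dD p)
  -- pd of u
  have hu : ∀ (i : Fin 3) (p),
      pd i (fun s => (R1 s - R2 s) ^ 2) p
        = 2 * (R1 p - R2 p) * (pd i R1 p - pd i R2 p) := by
    intro i p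
    have e : (fun s => (R1 s - R2 s) ^ 2) = fun s => (R1 s - R2 s) * (R1 s - R2 s) := by
      funext s; ring
    rw [e, pd_mul i (dD p) (dD p), pd_sub i (d1 p) (d2 p)]
    ring
  have hw : ∀ (i : Fin 3) (p),
      pd i (fun s => 2 * (R1 s - R2 s) ^ 2 * (R1 s + R2 s)) p
        = 2 * (2 * (R1 p - R2 p) * (pd i R1 p - pd i R2 p)) * (R1 p + R2 p)
          + 2 * (R1 p - R2 p) ^ 2 * (pd i R1 p + pd i R2 p) := by
    intro i p
    have e : (fun s => 2 * (R1 s - R2 s) ^ 2 * (R1 s + R2 s))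
        = fun s => (2 * (R1 s - R2 s) ^ 2) * (R1 s + R2 s) := by
      funext s; ring
    rw [e, pd_mul i ((dU p).const_mul 2) (dS p),
      pd_const_mul i (dU p) 2, hu i p, pd_add i (d1 p) (d2 p)]
  constructor
  · intro r
    rw [hu 2 r, hu 0 r, hw 1 r, h1t r, h2t r, h1y r, h2y r]
    ring
  · intro r
    rw [hu 1 r, hw 0 r, h1y r, h2y r]
    ring
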